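/- Let 0 < h < 1/4, b = argcosh(1/√(4h)), and g(x) = 1/x - (1-x)(1-√(1-4hx))/(2hx^2). Then for every integer r ≥ 0 and x ∈ [0,1), the r-th iterate of g satisfies g^{∘r}(x) = 1 - (1-4h)/(4h·sinh²(argsinh√((1-4h)/(4h(1-x))) + r·b)). -/

import Mathlib

/-!
The substitution `x = 1 - sinh² b / sinh² t` conjugates `g` to the translation `t ↦ t + b`.
Indeed `4h = 1 / cosh² b`, so `(1 - 4h) / (4h) = sinh² b`, and for `t ≥ b` one has
`1 - x = sinh² b / sinh² t`, `x = sinh (t + b) sinh (t - b) / sinh² t` and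
`√(1 - 4hx) = tanh b / tanh t`; with these, `g x = 1 - sinh² b / sinh² (t + b)` is an identity
between hyperbolic functions. The point `x` itself corresponds to
`t₀ = arsinh √(sinh² b / (1 - x)) ≥ b`, and iterating the translation gives `t₀ + r b`.
-/

/-- The offspring generating function `g_λ`, extended continuously at `0` by `g(0) = 1-h`. -/
noncomputable def gGen (h : ℝ) (x : ℝ) : ℝ :=
  if x = 0 then 1 - h
  else 1/x - (1 - x) * (1 - Real.sqrt (1 - 4*h*x)) / (2*h*x^2)

open Real

theorem Function.iterate_apply_eq_of_map_add {β : Type*} {f : β → β} {φ : ℝ → β} {b t₀ : ℝ}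
    (hb : 0 ≤ b) (hf : ∀ t ≥ t₀, f (φ t) = φ (t + b)) (r : ℕ) :
    f^[r] (φ t₀) = φ (t₀ + r * b) := by
  induction r with
  | zero => simp
  | succ r ih =>
    rw [Function.iterate_succ_apply', ih, hf _ (le_add_of_nonneg_right (by positivity))]
    push_cast
    ring_nf

theorem Real.sinh_sq_sub_sinh_sq (x y : ℝ) :
    sinh x ^ 2 - sinh y ^ 2 = sinh (x + y) * sinh (x - y) := by
  rw [sinh_add, sinh_sub]
  linear_combination sinh y ^ 2 * cosh_sq x - sinh x ^ 2 * cosh_sq y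

theorem Real.one_sub_div_sinh_arsinh_sqrt_sq {c x : ℝ} (hc : 0 < c) (hx : x < 1) :
    1 - c / sinh (arsinh √(c / (1 - x))) ^ 2 = x := by
  have : 0 < 1 - x := by linarith
  rw [sinh_arsinh, sq_sqrt (by positivity)]
  field_simp
  ring

theorem gGen_zero (h : ℝ) : gGen h 0 = 1 - h := if_pos rfl

theorem gGen_of_ne_zero (h : ℝ) {x : ℝ} (hx : x ≠ 0) :
    gGen h x = 1 / x - (1 - x) * (1 - √(1 - 4 * h * x)) / (2 * h * x ^ 2) := if_neg hx

theorem gGen_one_sub_sinh_sq_div_of_lt {b t : ℝ} (hb : 0 < b) (hbt : b < t) :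
    gGen (4 * cosh b ^ 2)⁻¹ (1 - sinh b ^ 2 / sinh t ^ 2) =
      1 - sinh b ^ 2 / sinh (t + b) ^ 2 := by
  have hsb : 0 < sinh b := sinh_pos_iff.2 hb
  have hst : 0 < sinh t := sinh_pos_iff.2 (hb.trans hbt)
  have hP : 0 < sinh (t + b) := sinh_pos_iff.2 (by linarith)
  have hM : 0 < sinh (t - b) := sinh_pos_iff.2 (by linarith)
  have hcb := cosh_pos b
  have hct := cosh_pos t
  have hx : 1 - sinh b ^ 2 / sinh t ^ 2 = sinh (t + b) * sinh (t - b) / sinh t ^ 2 := by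
    rw [← sinh_sq_sub_sinh_sq]
    field_simp
  have hsqrt : √(1 - 4 * (4 * cosh b ^ 2)⁻¹ * (1 - sinh b ^ 2 / sinh t ^ 2)) =
      sinh b * cosh t / (cosh b * sinh t) := by
    rw [← sqrt_sq (by positivity : 0 ≤ sinh b * cosh t / (cosh b * sinh t))]
    congr 1
    field_simp
    linear_combination sinh t ^ 2 * cosh_sq b - sinh b ^ 2 * cosh_sq t
  rw [gGen_of_ne_zero _ (by rw [hx]; positivity), hsqrt, hx]
  field_simp
  -- with `P = sinh (t + b)`, `M = sinh (t - b)`, `s = sinh t`: `P + M = 2 s cosh b`, `P M = s² - sinh² b`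
  linear_combination
    (2 * sinh (t - b) * sinh (t + b) - 4 * sinh t * cosh b * (sinh t * cosh b - sinh b * cosh t))
      * sinh_sq_sub_sinh_sq t b
    + (4 * sinh t * cosh b + 2 * sinh (t - b)) * sinh b ^ 2 * sinh_sub t b
    + 2 * sinh (t - b) * sinh b ^ 2 * sinh_add t b

theorem gGen_one_sub_sinh_sq_div {b t : ℝ} (hb : 0 < b) (hbt : b ≤ t) :
    gGen (4 * cosh b ^ 2)⁻¹ (1 - sinh b ^ 2 / sinh t ^ 2) =
      1 - sinh b ^ 2 / sinh (t + b) ^ 2 := by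
  rcases hbt.eq_or_lt with rfl | hbt
  · have hsb : 0 < sinh b := sinh_pos_iff.2 hb
    have hcb := cosh_pos b
    rw [div_self (pow_pos hsb 2).ne', sub_self, gGen_zero, ← two_mul, sinh_two_mul]
    field_simp
    ring
  · exact gGen_one_sub_sinh_sq_div_of_lt hb hbt

/-- closed form for the iterates of `g` in the subcritical case `0 < h < 1/4`:
`g^{∘r}(x) = 1 - (1-4h)/(4h sinh²(arsinh √((1-4h)/(4h(1-x))) + r b))`, `b = arcosh(1/√(4h))`. -/
theorem stmt_7 (h : ℝ) (hh : 0 < h) (hh4 : h < 1/4)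
    (b : ℝ) (hb : 0 ≤ b) (hcb : Real.cosh b = 1 / Real.sqrt (4*h)) :
    ∀ (r : ℕ) (x : ℝ), x ∈ Set.Ico (0 : ℝ) 1 →
      (gGen h)^[r] x =
        1 - (1 - 4*h) /
          (4*h * (Real.sinh (Real.arsinh (Real.sqrt ((1 - 4*h) / (4*h*(1 - x)))) + r * b))^2) := by
  rintro r x ⟨hx0, hx1⟩
  have hcb2 : cosh b ^ 2 = 1 / (4 * h) := by
    rw [hcb, div_pow, one_pow, sq_sqrt (by positivity)]
  have hb0 : 0 < b := by
    have : 1 < cosh b ^ 2 := by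
      rw [hcb2, lt_div_iff₀ (by positivity)]
      linarith
    exact hb.lt_of_ne (one_lt_cosh.1 ((one_lt_sq_iff₀ (cosh_pos b).le).1 this)).symm
  have hsb : 0 < sinh b := sinh_pos_iff.2 hb0
  have hc : (1 - 4 * h) / (4 * h) = sinh b ^ 2 := by
    rw [sinh_sq, hcb2]
    field_simp
  have hh' : h = (4 * cosh b ^ 2)⁻¹ := by
    rw [hcb2]
    field_simp
  have ht₀ : b ≤ arsinh √(sinh b ^ 2 / (1 - x)) := by
    rw [← sinh_le_sinh, sinh_arsinh, le_sqrt' hsb]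
    exact le_div_self (sq_nonneg _) (by linarith) (by linarith)
  have key := Function.iterate_apply_eq_of_map_add (φ := fun t => 1 - sinh b ^ 2 / sinh t ^ 2) hb
    (fun t ht => gGen_one_sub_sinh_sq_div hb0 (ht₀.trans ht)) r
  simp only [← div_div, hc]
  rwa [one_sub_div_sinh_arsinh_sqrt_sq (by positivity) hx1, ← hh'] at key
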